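/- arXiv:2006.09349 — 7 statements merged into one kernel-verified Lean document; each statement's English description precedes it below -/
import Mathlib

section
/- Let L ≥ 1, θ ∈ ℝ and x = (x₁,…,x_{2L}) ∈ ℝ^{2L}. Then: (i) ⟨e₀, Q(θ;x)† P(θ) Q(θ;x) e₀⟩ = i · Q₀₀[(x₁,…,x_{2L}, π/2, −x_{2L}, −x_{2L−1}, …, −x₁)](θ), where Q(θ;x)† denotes the conjugate transpose; (ii) for each d ∈ {0,1}, ‖ (1/2)(I + (−1)^d Q(θ;x)) e₀ ‖² = (1/2)[1 + (−1)^d Re Q₀₀[x](θ)]. (This identifies the ancilla-free bias Λ^AF(θ;x) := ⟨e₀, Q(θ;x)† P(θ) Q(θ;x) e₀⟩ with i·Q₀₀ of the extended parameter vector, and the ancilla-based likelihood with (1/2)[1 + (−1)^d Re Q₀₀[x](θ)].) -/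
/-!
Every factor of `Q(θ;z)` has the form `exp(-i a A) = cos a • 1 - i sin a • A` for a Hermitian
involution `A ∈ {P(θ), Z}`, so it is unitary with inverse obtained by negating the angle.
Hence running the word `x` backwards with negated angles produces `Q(θ;x)†`, and since
`i • U(θ;π/2) = P(θ)`, the conjugate `Q† P Q` is `i` times `Q` of the palindromic extension
(the even length of `x` makes the parities of the factors line up). For the Hadamard test,
`‖½(e₀ ± Q e₀)‖² = ¼(1 ± 2 Re Q₀₀ + ‖Q e₀‖²)` and `‖Q e₀‖ = 1` by unitarity.
-/

open Matrix

noncomputable section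

/-- The Pauli matrix `X = !![0,1;1,0]`. -/
def Xm : Matrix (Fin 2) (Fin 2) ℂ := !![0, 1; 1, 0]

/-- The Pauli matrix `Z = !![1,0;0,−1]`. -/
def Zm : Matrix (Fin 2) (Fin 2) ℂ := !![1, 0; 0, -1]

/-- `P(θ) = cos θ • Z + sin θ • X`. -/
def Pmat (θ : ℝ) : Matrix (Fin 2) (Fin 2) ℂ :=
  (Real.cos θ : ℂ) • Zm + (Real.sin θ : ℂ) • Xm

/-- `U(θ;α) = cos α • I − i sin α • P(θ)`. -/
def Umat (θ a : ℝ) : Matrix (Fin 2) (Fin 2) ℂ :=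
  (Real.cos a : ℂ) • (1 : Matrix (Fin 2) (Fin 2) ℂ) - (Complex.I * (Real.sin a : ℂ)) • Pmat θ

/-- `V(β) = cos β • I − i sin β • Z`. -/
def Vmat (b : ℝ) : Matrix (Fin 2) (Fin 2) ℂ :=
  (Real.cos b : ℂ) • (1 : Matrix (Fin 2) (Fin 2) ℂ) - (Complex.I * (Real.sin b : ℂ)) • Zm

/-- Auxiliary recursion for `Q(θ;z)`: the boolean flag records whether the position of
the head of the list is odd (odd positions use `U(θ;·)`, even positions use `V(·)`);
the head of the list is the *rightmost* factor. -/
def Qaux (θ : ℝ) : Bool → List ℝ → Matrix (Fin 2) (Fin 2) ℂ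
  | _, [] => 1
  | odd, z :: rest => Qaux θ (!odd) rest * (if odd then Umat θ z else Vmat z)

/-- `Q(θ; (z₁,…,z_m)) = R_m(z_m) ⋯ R₂(z₂) R₁(z₁)` with `R_j = U(θ;·)` for odd `j` and
`R_j = V(·)` for even `j`. -/
def Qmat (θ : ℝ) (zs : List ℝ) : Matrix (Fin 2) (Fin 2) ℂ := Qaux θ true zs

end

section Rotation

variable {n : Type*} [DecidableEq n]

/-- `exp(-i a A)` when `A` is an involution. -/
noncomputable def involutionRotation (A : Matrix n n ℂ) (a : ℝ) : Matrix n n ℂ :=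
  (Real.cos a : ℂ) • (1 : Matrix n n ℂ) - (Complex.I * (Real.sin a : ℂ)) • A

variable {A : Matrix n n ℂ}

lemma involutionRotation_conjTranspose (hA : Aᴴ = A) (a : ℝ) :
    (involutionRotation A a)ᴴ = involutionRotation A (-a) := by
  simp [involutionRotation, conjTranspose_smul, hA, sub_eq_add_neg, ← Complex.cos_conj,
    ← Complex.sin_conj]

lemma involutionRotation_neg_mul [Fintype n] (hA : A * A = 1) (a : ℝ) :
    involutionRotation A (-a) * involutionRotation A a = 1 := by
  have h := Complex.sin_sq_add_cos_sq (a : ℂ)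
  simp only [involutionRotation, Real.cos_neg, Real.sin_neg, Complex.ofReal_neg, mul_neg,
    neg_smul, sub_neg_eq_add, add_mul, mul_sub, smul_mul_assoc, mul_smul_comm,
    mul_one, one_mul, hA]
  match_scalars
  · linear_combination h - Complex.sin (a : ℂ) ^ 2 * Complex.I_sq
  · ring

lemma involutionRotation_mem_unitaryGroup [Fintype n] (hA : Aᴴ = A) (hA2 : A * A = 1) (a : ℝ) :
    involutionRotation A a ∈ unitaryGroup n ℂ := by
  rw [mem_unitaryGroup_iff', star_eq_conjTranspose, involutionRotation_conjTranspose hA,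
    involutionRotation_neg_mul hA2]

end Rotation

lemma Pmat_conjTranspose (θ : ℝ) : (Pmat θ)ᴴ = Pmat θ := by
  ext i j
  fin_cases i <;> fin_cases j <;>
    simp [Pmat, Zm, Xm, ← Complex.cos_conj, ← Complex.sin_conj]

lemma Pmat_mul_self (θ : ℝ) : Pmat θ * Pmat θ = 1 := by
  have h := Complex.sin_sq_add_cos_sq (θ : ℂ)
  ext i j
  fin_cases i <;> fin_cases j <;> simp [Pmat, Zm, Xm, mul_apply, one_apply] <;>
    first | linear_combination h | ring1

lemma Zm_conjTranspose : Zmᴴ = Zm := by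
  ext i j
  fin_cases i <;> fin_cases j <;> simp [Zm]

lemma Zm_mul_self : Zm * Zm = 1 := by
  ext i j
  fin_cases i <;> fin_cases j <;> simp [Zm, mul_apply, one_apply]

lemma I_smul_Umat_pi_div_two (θ : ℝ) : Complex.I • Umat θ (Real.pi / 2) = Pmat θ := by
  simp [Umat, smul_smul]

/-- The factor `R_j(z)` of `Q(θ;·)`, the flag `b` recording whether `j` is odd. -/
noncomputable def Rmat (θ : ℝ) (b : Bool) (z : ℝ) : Matrix (Fin 2) (Fin 2) ℂ :=
  if b then Umat θ z else Vmat z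

lemma Rmat_conjTranspose (θ : ℝ) (b : Bool) (z : ℝ) : (Rmat θ b z)ᴴ = Rmat θ b (-z) := by
  cases b
  · exact involutionRotation_conjTranspose Zm_conjTranspose z
  · exact involutionRotation_conjTranspose (Pmat_conjTranspose θ) z

lemma Rmat_mem_unitaryGroup (θ : ℝ) (b : Bool) (z : ℝ) :
    Rmat θ b z ∈ unitaryGroup (Fin 2) ℂ := by
  cases b
  · exact involutionRotation_mem_unitaryGroup Zm_conjTranspose Zm_mul_self z
  · exact involutionRotation_mem_unitaryGroup (Pmat_conjTranspose θ) (Pmat_mul_self θ) z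

lemma Qaux_nil (θ : ℝ) (b : Bool) : Qaux θ b [] = 1 := rfl

lemma Qaux_cons (θ : ℝ) (b : Bool) (z : ℝ) (zs : List ℝ) :
    Qaux θ b (z :: zs) = Qaux θ (!b) zs * Rmat θ b z := rfl

lemma Qaux_mem_unitaryGroup (θ : ℝ) (b : Bool) (zs : List ℝ) :
    Qaux θ b zs ∈ unitaryGroup (Fin 2) ℂ := by
  induction zs generalizing b with
  | nil => exact one_mem _
  | cons z zs ih => exact mul_mem (ih _) (Rmat_mem_unitaryGroup θ b z)

lemma Qaux_append (θ : ℝ) (b : Bool) (zs ws : List ℝ) :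
    Qaux θ b (zs ++ ws) = Qaux θ (not^[zs.length] b) ws * Qaux θ b zs := by
  induction zs generalizing b with
  | nil => simp [Qaux_nil]
  | cons z zs ih =>
    rw [List.cons_append, Qaux_cons, ih, Qaux_cons, List.length_cons,
      Function.iterate_succ_apply, mul_assoc]

lemma Qaux_reverse_map_neg (θ : ℝ) (b : Bool) (zs : List ℝ) :
    Qaux θ (not^[zs.length + 1] b) (zs.map (fun t => -t)).reverse = (Qaux θ b zs)ᴴ := by
  induction zs generalizing b with
  | nil => simp [Qaux_nil]
  | cons z zs ih =>
    have hflag : not^[zs.length] (not^[zs.length + 1] (!b)) = b := by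
      rw [← Function.iterate_succ_apply, ← Function.iterate_add_apply]
      exact congrFun (Bool.involutive_not.iterate_even ⟨zs.length + 1, by omega⟩) b
    rw [List.map_cons, List.reverse_cons, Qaux_append, List.length_reverse, List.length_map,
      Function.iterate_succ_apply, List.length_cons, ih, hflag, Qaux_cons, Qaux_nil, one_mul,
      Qaux_cons, conjTranspose_mul, Rmat_conjTranspose]

lemma Qmat_append_singleton_append_reverse_map_neg (θ a : ℝ) {xs : List ℝ}
    (hxs : Even xs.length) :
    Qmat θ (xs ++ [a] ++ (xs.map (fun t => -t)).reverse)
      = (Qmat θ xs)ᴴ * Umat θ a * Qmat θ xs := by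
  rw [Qmat, Qaux_append, Qaux_append, List.length_append, List.length_singleton,
    Qaux_reverse_map_neg, Bool.involutive_not.iterate_even hxs, id, Qaux_cons, Qaux_nil,
    one_mul, mul_assoc]
  rfl

lemma norm_sq_add_norm_sq_col_zero {Q : Matrix (Fin 2) (Fin 2) ℂ}
    (hQ : Q ∈ unitaryGroup (Fin 2) ℂ) : ‖Q 0 0‖ ^ 2 + ‖Q 1 0‖ ^ 2 = 1 := by
  have h := congrFun (congrFun (mem_unitaryGroup_iff'.mp hQ) 0) 0
  simp only [mul_apply, Fin.sum_univ_two, star_apply, RCLike.star_def, Complex.conj_mul',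
    one_apply_eq] at h
  exact_mod_cast h

lemma hadamard_test {Q : Matrix (Fin 2) (Fin 2) ℂ} (hQ : Q ∈ unitaryGroup (Fin 2) ℂ)
    {s : ℝ} (hs : s ^ 2 = 1) :
    ∑ i : Fin 2, ‖(((1 : ℂ) / 2) • ((1 + (s : ℂ) • Q) *ᵥ ![1, 0])) i‖ ^ 2
      = 1 / 2 * (1 + s * (Q 0 0).re) := by
  have hcol := norm_sq_add_norm_sq_col_zero hQ
  simp only [Complex.sq_norm, Complex.normSq_apply] at hcol ⊢
  simp only [one_div, Complex.coe_smul, mulVec_fin_two, Matrix.add_apply, one_apply, ↓reduceIte,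
    Matrix.smul_apply, Complex.real_smul, cons_val_zero, mul_one, zero_ne_one, zero_add,
    cons_val_one, cons_val_fin_one, mul_zero, add_zero, one_ne_zero, Pi.smul_apply, smul_eq_mul,
    Complex.mul_re, Complex.inv_re, Complex.re_ofNat, Complex.normSq_ofNat, div_self_mul_self',
    Complex.inv_im, Complex.im_ofNat, neg_zero, zero_div, zero_mul, sub_zero, Complex.mul_im,
    Fin.sum_univ_two, Complex.add_re, Complex.one_re, Complex.ofReal_re, Complex.ofReal_im,
    Complex.add_im, Complex.one_im]
  linear_combination s ^ 2 / 4 * hcol + hs / 4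

theorem statement0_general (L : ℕ) (θ : ℝ) (xs : List ℝ) (hxs : xs.length = 2 * L) :
    (((Qmat θ xs)ᴴ * Pmat θ * Qmat θ xs) 0 0
        = Complex.I * Qmat θ (xs ++ [Real.pi / 2] ++ (xs.map (fun t => -t)).reverse) 0 0) ∧
    (∀ d : ℕ, d = 0 ∨ d = 1 →
      (∑ i : Fin 2,
          ‖(((1 : ℂ) / 2) • ((1 + ((-1 : ℂ)) ^ d • Qmat θ xs).mulVec ![1, 0])) i‖ ^ 2)
        = (1 / 2) * (1 + (-1 : ℝ) ^ d * (Qmat θ xs 0 0).re)) := by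
  have heven : Even xs.length := ⟨L, by omega⟩
  refine ⟨?_, fun d _ => ?_⟩
  · rw [Qmat_append_singleton_append_reverse_map_neg θ _ heven, ← I_smul_Umat_pi_div_two θ]
    simp only [Matrix.smul_mul, Matrix.mul_smul, Matrix.smul_apply, smul_eq_mul]
  · have hsq : ((-1 : ℝ) ^ d) ^ 2 = 1 := by rw [← pow_mul, mul_comm, pow_mul, neg_one_sq, one_pow]
    have h := hadamard_test (Qaux_mem_unitaryGroup θ true xs) hsq
    push_cast at h
    exact h

/-- (i) the ancilla-free bias `⟨e₀, Q(θ;x)† P(θ) Q(θ;x) e₀⟩` equals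
`i · Q₀₀[(x, π/2, −xᴿ)](θ)`; (ii) for each `d ∈ {0,1}` the ancilla-based probability
`‖(1/2)(I + (−1)^d Q(θ;x)) e₀‖²` equals `(1/2)[1 + (−1)^d Re Q₀₀[x](θ)]`.
Here `⟨e₀, M e₀⟩` is the `(0,0)` entry of `M`, and the squared Euclidean norm of a
vector `v ∈ ℂ²` is `Σ i, ‖v i‖²`. -/
theorem statement0 (L : ℕ) (hL : 1 ≤ L) (θ : ℝ) (xs : List ℝ) (hxs : xs.length = 2 * L) :
    (((Qmat θ xs)ᴴ * Pmat θ * Qmat θ xs) 0 0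
        = Complex.I * Qmat θ (xs ++ [Real.pi / 2] ++ (xs.map (fun t => -t)).reverse) 0 0) ∧
    (∀ d : ℕ, d = 0 ∨ d = 1 →
      (∑ i : Fin 2,
          ‖(((1 : ℂ) / 2) • ((1 + ((-1 : ℂ)) ^ d • Qmat θ xs).mulVec ![1, 0])) i‖ ^ 2)
        = (1 / 2) * (1 + (-1 : ℝ) ^ d * (Qmat θ xs 0 0).re)) :=
  statement0_general L θ xs hxs
end

section
/- Suppose Ω = {0,1}. If I₀ ∈ {0,1} then the expected posterior variance equals σ². If I₀ ∉ {0,1}, then the expected posterior variance equals σ² − (I₁ − μ I₀)² / (I₀ (1 − I₀)). -/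
/-!
Write `w₀ = L(·;0) p` and `w₁ = L(·;1) p`, so that `w₀ + w₁ = p`. Each summand of the expected
posterior variance is `I₂(d) − I₁(d)²/I₀(d)`, and the `I₂` terms add up to the second moment
`σ² + μ²`. If `I₀(d) = 0` then `w_d = 0` almost everywhere, so all moments of `w_d` vanish and the
other outcome carries the full moments `1, μ`; otherwise the identity
`y²/a + (μ − y)²/(1 − a) = μ² + (y − μa)²/(a(1 − a))` gives the correction term.
-/

open MeasureTheory Finset

/-- On the right, a summand with `a i = 0` is `c i` since `b i ^ 2 / 0 = 0`. -/
theorem Finset.sum_filter_ne_zero_mul_sub_sq_div {ι : Type*} [Fintype ι] (a b c : ι → ℝ)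
    [DecidablePred fun i => a i ≠ 0] (h : ∀ i, a i = 0 → c i = 0) :
    ∑ i ∈ univ.filter (fun i => a i ≠ 0), a i * (c i / a i - (b i / a i) ^ 2) =
      ∑ i, (c i - b i ^ 2 / a i) := by
  rw [sum_filter]
  refine sum_congr rfl fun i _ => ?_
  split_ifs with hi
  · field_simp
  · simp [not_not.mp hi, h i (not_not.mp hi)]

theorem sq_div_add_sq_div_of_add_eq_one {x₀ x₁ y₀ y₁ m : ℝ} (hx : x₀ + x₁ = 1) (hy : y₀ + y₁ = m)
    (hy₀ : x₀ = 0 → y₀ = 0) (hy₁ : x₁ = 0 → y₁ = 0) :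
    (x₀ = 0 ∨ x₀ = 1 → y₀ ^ 2 / x₀ + y₁ ^ 2 / x₁ = m ^ 2) ∧
    (x₀ ≠ 0 ∧ x₀ ≠ 1 →
      y₀ ^ 2 / x₀ + y₁ ^ 2 / x₁ = m ^ 2 + (y₀ - m * x₀) ^ 2 / (x₀ * (1 - x₀))) := by
  obtain rfl : x₁ = 1 - x₀ := by linarith
  obtain rfl : y₁ = m - y₀ := by linarith
  refine ⟨?_, fun ⟨h₀, h₁⟩ => ?_⟩
  · rintro (rfl | rfl)
    · simp [hy₀ rfl]
    · have : y₀ = m := by linarith [hy₁ (sub_self 1)]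
      simp [this]
  · have h₁' : 1 - x₀ ≠ 0 := sub_ne_zero.mpr (Ne.symm h₁)
    field_simp
    ring

section Weights

variable {α : Type*} [MeasurableSpace α] {ν : Measure α}

theorem integral_mul_eq_zero_of_integral_eq_zero {w : α → ℝ} (hw : 0 ≤ w)
    (hwi : Integrable w ν) (h : ∫ x, w x ∂ν = 0) (g : α → ℝ) : ∫ x, g x * w x ∂ν = 0 :=
  integral_eq_zero_of_ae <| ((integral_eq_zero_iff_of_nonneg hw hwi).mp h).mono
    fun x hx => by simp [hx]

variable {f g L : α → ℝ}

theorem MeasureTheory.Integrable.mul_of_mem_Icc (hf : Integrable f ν)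
    (hL : AEStronglyMeasurable L ν) (hL₀ : ∀ x, 0 ≤ L x) (hL₁ : ∀ x, L x ≤ 1) :
    Integrable (fun x => L x * f x) ν :=
  hf.bdd_mul hL (c := 1) <| ae_of_all _ fun x => by
    rw [Real.norm_eq_abs, abs_of_nonneg (hL₀ x)]
    exact hL₁ x

theorem MeasureTheory.Integrable.mul_mul_of_mem_Icc (hgf : Integrable (fun x => g x * f x) ν)
    (hL : AEStronglyMeasurable L ν) (hL₀ : ∀ x, 0 ≤ L x) (hL₁ : ∀ x, L x ≤ 1) :
    Integrable (fun x => g x * (L x * f x)) ν :=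
  (hgf.mul_of_mem_Icc hL hL₀ hL₁).congr <| ae_of_all _ fun x => by ring

theorem integral_mul_mul_eq_zero_of_integral_eq_zero (hf : Integrable f ν) (hf₀ : ∀ x, 0 ≤ f x)
    (hL : AEStronglyMeasurable L ν) (hL₀ : ∀ x, 0 ≤ L x) (hL₁ : ∀ x, L x ≤ 1)
    (h : ∫ x, L x * f x ∂ν = 0) (g : α → ℝ) : ∫ x, g x * (L x * f x) ∂ν = 0 :=
  integral_mul_eq_zero_of_integral_eq_zero (fun x => mul_nonneg (hL₀ x) (hf₀ x))
    (hf.mul_of_mem_Icc hL hL₀ hL₁) h g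

theorem integral_mul_mul_add_integral_mul_one_sub_mul (hgf : Integrable (fun x => g x * f x) ν)
    (hL : AEStronglyMeasurable L ν) (hL₀ : ∀ x, 0 ≤ L x) (hL₁ : ∀ x, L x ≤ 1) :
    ∫ x, g x * (L x * f x) ∂ν + ∫ x, g x * ((1 - L x) * f x) ∂ν = ∫ x, g x * f x ∂ν := by
  have hcompl : Integrable (fun x => g x * ((1 - L x) * f x)) ν :=
    hgf.mul_mul_of_mem_Icc (aestronglyMeasurable_const.sub hL) (fun x => by linarith [hL₁ x])
      (fun x => by linarith [hL₀ x])
  rw [← integral_add (hgf.mul_mul_of_mem_Icc hL hL₀ hL₁) hcompl]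
  congr 1 with x
  ring

end Weights

section Moments

variable {ν : Measure ℝ} {p : ℝ → ℝ}

theorem MeasureTheory.Integrable.mul_of_sq_mul (hp : Integrable p ν) (hp₂ : Integrable (fun θ => θ ^ 2 * p θ) ν) :
    Integrable (fun θ => θ * p θ) ν := by
  refine (hp.norm.add hp₂.norm).mono' (aestronglyMeasurable_id.mul hp.1) (ae_of_all _ fun θ => ?_)
  simp only [Pi.add_apply, norm_mul, norm_pow, Real.norm_eq_abs, sq_abs]
  nlinarith [mul_nonneg (abs_nonneg (p θ)) (sq_nonneg (|θ| - 1)), sq_abs θ,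
    mul_nonneg (abs_nonneg θ) (abs_nonneg (p θ))]

theorem integral_sub_sq_mul_eq_of_integral_eq_one (hp : Integrable p ν)
    (hp₂ : Integrable (fun θ => θ ^ 2 * p θ) ν) (hp₁ : ∫ θ, p θ ∂ν = 1) :
    ∫ θ, (θ - ∫ θ, θ * p θ ∂ν) ^ 2 * p θ ∂ν =
      ∫ θ, θ ^ 2 * p θ ∂ν - (∫ θ, θ * p θ ∂ν) ^ 2 := by
  set m := ∫ θ, θ * p θ ∂ν
  have hexpand : ∀ θ, (θ - m) ^ 2 * p θ = θ ^ 2 * p θ - 2 * m * (θ * p θ) + m ^ 2 * p θ :=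
    fun θ => by ring
  have hθp := hp.mul_of_sq_mul hp₂
  have hlin : Integrable (fun θ => 2 * m * (θ * p θ)) ν := hθp.const_mul _
  have hquad : Integrable (fun θ => θ ^ 2 * p θ - 2 * m * (θ * p θ)) ν := hp₂.sub hlin
  simp_rw [hexpand]
  rw [integral_add hquad (hp.const_mul _), integral_sub hp₂ hlin, integral_const_mul,
    integral_const_mul, hp₁]
  ring

end Moments

open scoped Classical in
theorem statement2_general
    (p : ℝ → ℝ) (hp_nonneg : ∀ θ, 0 ≤ p θ)
    (hp_one : (∫ θ : ℝ, p θ) = 1)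
    (hp_sq : Integrable (fun θ : ℝ => θ ^ 2 * p θ))
    (L0 : ℝ → ℝ) (hL_cont : Continuous L0)
    (hL_nonneg : ∀ θ, 0 ≤ L0 θ) (hL_le : ∀ θ, L0 θ ≤ 1)
    (μ σ2 : ℝ) (hμ : μ = ∫ θ : ℝ, θ * p θ) (hσ : σ2 = ∫ θ : ℝ, (θ - μ) ^ 2 * p θ)
    (I : ℕ → Fin 2 → ℝ)
    (hI0 : ∀ k, I k 0 = ∫ θ : ℝ, θ ^ k * (L0 θ * p θ))
    (hI1 : ∀ k, I k 1 = ∫ θ : ℝ, θ ^ k * ((1 - L0 θ) * p θ))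
    (EPV : ℝ)
    (hEPV : EPV = ∑ d ∈ Finset.univ.filter (fun d : Fin 2 => I 0 d ≠ 0),
        I 0 d * (I 2 d / I 0 d - (I 1 d / I 0 d) ^ 2)) :
    (I 0 0 = 0 ∨ I 0 0 = 1 → EPV = σ2) ∧
    (I 0 0 ≠ 0 ∧ I 0 0 ≠ 1 →
      EPV = σ2 - (I 1 0 - μ * I 0 0) ^ 2 / (I 0 0 * (1 - I 0 0))) := by
  have hp : Integrable p := .of_integral_ne_zero (by simp [hp_one])
  have hL : AEStronglyMeasurable L0 := hL_cont.aestronglyMeasurable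
  have hmoment : ∀ k, Integrable (fun θ : ℝ => θ ^ k * p θ) →
      I k 0 + I k 1 = ∫ θ : ℝ, θ ^ k * p θ := fun k hk => by
    rw [hI0, hI1]
    exact integral_mul_mul_add_integral_mul_one_sub_mul hk hL hL_nonneg hL_le
  have hmass : I 0 0 + I 0 1 = 1 := by simpa [hp_one] using hmoment 0 (by simpa using hp)
  have hmean : I 1 0 + I 1 1 = μ := by
    simpa [hμ] using hmoment 1 (by simpa using hp.mul_of_sq_mul hp_sq)
  have hvanish : ∀ d, I 0 d = 0 → ∀ k, I k d = 0 := by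
    refine Fin.forall_fin_two.mpr ⟨fun hd k => ?_, fun hd k => ?_⟩
    · rw [hI0]
      exact integral_mul_mul_eq_zero_of_integral_eq_zero hp hp_nonneg hL hL_nonneg hL_le
        (by simpa [hI0] using hd) _
    · rw [hI1]
      exact integral_mul_mul_eq_zero_of_integral_eq_zero hp hp_nonneg
        (aestronglyMeasurable_const.sub hL) (fun θ => sub_nonneg.mpr (hL_le θ))
        (fun θ => sub_le_self 1 (hL_nonneg θ)) (by simpa [hI1] using hd) _
  have hσ2 : σ2 = (I 2 0 + I 2 1) - μ ^ 2 := by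
    rw [hσ, hmoment 2 hp_sq, hμ, integral_sub_sq_mul_eq_of_integral_eq_one hp hp_sq hp_one]
  obtain ⟨hdegenerate, hgeneric⟩ := sq_div_add_sq_div_of_add_eq_one hmass hmean
    (fun h => hvanish 0 h 1) (fun h => hvanish 1 h 1)
  rw [hEPV, sum_filter_ne_zero_mul_sub_sq_div _ _ _ (fun d h => hvanish d h 2),
    Fin.sum_univ_two, hσ2]
  refine ⟨fun h => ?_, fun h => ?_⟩
  · linear_combination -hdegenerate h
  · linear_combination -hgeneric h

open scoped Classical in
/-- for a two-outcome likelihood (`Ω = {0,1}`), if `I₀ ∈ {0,1}` then the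
expected posterior variance equals σ², and if `I₀ ∉ {0,1}` it equals
`σ² − (I₁ − μ I₀)²/(I₀(1 − I₀))`, where `I_k = I_k(0)`. -/
theorem statement2
    (p : ℝ → ℝ) (hp_cont : Continuous p) (hp_nonneg : ∀ θ, 0 ≤ p θ)
    (hp_one : (∫ θ : ℝ, p θ) = 1)
    (hp_sq : Integrable (fun θ : ℝ => θ ^ 2 * p θ))
    (L0 : ℝ → ℝ) (hL_cont : Continuous L0)
    (hL_nonneg : ∀ θ, 0 ≤ L0 θ) (hL_le : ∀ θ, L0 θ ≤ 1)
    (μ σ2 : ℝ) (hμ : μ = ∫ θ : ℝ, θ * p θ) (hσ : σ2 = ∫ θ : ℝ, (θ - μ) ^ 2 * p θ)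
    (I : ℕ → Fin 2 → ℝ)
    (hI0 : ∀ k, I k 0 = ∫ θ : ℝ, θ ^ k * (L0 θ * p θ))
    (hI1 : ∀ k, I k 1 = ∫ θ : ℝ, θ ^ k * ((1 - L0 θ) * p θ))
    (EPV : ℝ)
    (hEPV : EPV = ∑ d ∈ Finset.univ.filter (fun d : Fin 2 => I 0 d ≠ 0),
        I 0 d * (I 2 d / I 0 d - (I 1 d / I 0 d) ^ 2)) :
    (I 0 0 = 0 ∨ I 0 0 = 1 → EPV = σ2) ∧
    (I 0 0 ≠ 0 ∧ I 0 0 ≠ 1 →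
      EPV = σ2 - (I 1 0 - μ * I 0 0) ^ 2 / (I 0 0 * (1 - I 0 0))) :=
  statement2_general p hp_nonneg hp_one hp_sq L0 hL_cont hL_nonneg hL_le μ σ2 hμ hσ I hI0 hI1 EPV
    hEPV
end

section
/- Let N ∈ ℕ and c₀,…,c_N, d₀,…,d_N ∈ ℝ, and let Λ(θ) = Σ_{l=0}^N [c_l cos(lθ) + d_l sin(lθ)]. Then for all μ ∈ ℝ and σ > 0 the series Σ_{j=0}^∞ Λ^{(2j)}(μ) σ^{2j}/(2j)!! and Σ_{j=0}^∞ Λ^{(2j+1)}(μ) σ^{2j}/(2j)!! converge, and b(μ,σ) = Σ_{j=0}^∞ Λ^{(2j)}(μ) σ^{2j}/(2j)!! while χ(μ,σ) = Σ_{j=0}^∞ Λ^{(2j+1)}(μ) σ^{2j}/(2j)!!. Here Λ^{(k)} denotes the k-th derivative of Λ and (2j)!! = 2^j · j!. -/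
open MeasureTheory

/-- The Gaussian density with mean μ and standard deviation σ. -/
noncomputable def gaussDensity (μ σ θ : ℝ) : ℝ :=
  (Real.sqrt (2 * Real.pi) * σ)⁻¹ * Real.exp (-(θ - μ) ^ 2 / (2 * σ ^ 2))

/-- The expected bias `b(μ,σ) = ∫ p(θ;μ,σ) Λ(θ) dθ`. -/
noncomputable def expBias (Λ : ℝ → ℝ) (μ σ : ℝ) : ℝ :=
  ∫ θ : ℝ, gaussDensity μ σ θ * Λ θ

/-- The chi function `χ(μ,σ) = σ⁻² ∫ (θ−μ) p(θ;μ,σ) Λ(θ) dθ`. -/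
noncomputable def chiFun (Λ : ℝ → ℝ) (μ σ : ℝ) : ℝ :=
  (1 / σ ^ 2) * ∫ θ : ℝ, (θ - μ) * gaussDensity μ σ θ * Λ θ

/-! Against the Gaussian, `cos (a θ)` and `sin (a θ)` have expectations read off the
characteristic function `exp (i a μ - a² σ² / 2)`: the same function evaluated at `μ`, damped by
`exp (-a² σ² / 2)`. Two derivatives multiply the frequency-`a` component of a trigonometric sum
by `-a²`, so in each component the series `Σ Λ^{(2j)}(μ) σ^{2j} / (2^j j!)` is the exponential
series of `-a² σ² / 2` and produces the same damping. For `χ`, integration by parts against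
`p' = -((θ - μ) / σ²) p` (Stein's identity) gives `χ(Λ) = b(Λ')`, and `Λ'` is again a
trigonometric sum. -/

open Real ProbabilityTheory
open scoped NNReal

noncomputable def trigSum {ι : Type*} (s : Finset ι) (ω c d : ι → ℝ) (θ : ℝ) : ℝ :=
  ∑ i ∈ s, (c i * cos (ω i * θ) + d i * sin (ω i * θ))

namespace trigSum

variable {ι : Type*} (s : Finset ι) (ω c d : ι → ℝ)

theorem hasDerivAt (θ : ℝ) :
    HasDerivAt (trigSum s ω c d)
      (trigSum s ω (fun i => ω i * d i) (fun i => -(ω i * c i)) θ) θ := by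
  unfold trigSum
  refine HasDerivAt.fun_sum fun i _ => ?_
  have hlin : HasDerivAt (fun x => ω i * x) (ω i) θ := by
    simpa using (hasDerivAt_id θ).const_mul (ω i)
  convert ((hlin.cos.const_mul (c i)).fun_add (hlin.sin.const_mul (d i))) using 1
  ring

theorem deriv_eq :
    deriv (trigSum s ω c d) = trigSum s ω (fun i => ω i * d i) (fun i => -(ω i * c i)) :=
  funext fun θ => (hasDerivAt s ω c d θ).deriv

theorem differentiable : Differentiable ℝ (trigSum s ω c d) :=
  fun θ => (hasDerivAt s ω c d θ).differentiableAt

theorem iteratedDeriv_two_mul (j : ℕ) :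
    iteratedDeriv (2 * j) (trigSum s ω c d)
      = trigSum s ω (fun i => (-ω i ^ 2) ^ j * c i) (fun i => (-ω i ^ 2) ^ j * d i) := by
  induction j with
  | zero => simp
  | succ j ih =>
    rw [show 2 * (j + 1) = 2 * j + 1 + 1 by ring, iteratedDeriv_succ, iteratedDeriv_succ, ih,
      deriv_eq, deriv_eq]
    congr 1 <;> funext i <;> ring

theorem abs_le (θ : ℝ) : |trigSum s ω c d θ| ≤ ∑ i ∈ s, (|c i| + |d i|) := by
  refine (Finset.abs_sum_le_sum_abs _ _).trans (Finset.sum_le_sum fun i _ => ?_)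
  refine (abs_add_le _ _).trans (add_le_add ?_ ?_) <;> rw [abs_mul] <;>
    exact mul_le_of_le_one_right (abs_nonneg _)
      (by first | exact abs_cos_le_one _ | exact abs_sin_le_one _)

end trigSum

section Gaussian

variable {μ σ : ℝ}

theorem gaussDensity_eq_gaussianPDFReal (hσ : 0 ≤ σ) :
    gaussDensity μ σ = gaussianPDFReal μ (σ ^ 2).toNNReal := by
  funext θ
  simp only [gaussDensity, gaussianPDFReal, Real.coe_toNNReal _ (sq_nonneg σ),
    Real.sqrt_mul (by positivity : (0 : ℝ) ≤ 2 * π), Real.sqrt_sq hσ]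

theorem expBias_eq_integral_gaussianReal (hσ : 0 < σ) (Λ : ℝ → ℝ) :
    expBias Λ μ σ = ∫ θ, Λ θ ∂gaussianReal μ (σ ^ 2).toNNReal := by
  rw [integral_gaussianReal_eq_integral_smul, expBias, gaussDensity_eq_gaussianPDFReal hσ.le]
  · rfl
  · simpa [← NNReal.coe_ne_zero] using hσ.ne'

theorem integrable_gaussDensity (hσ : 0 < σ) : Integrable (gaussDensity μ σ) := by
  rw [gaussDensity_eq_gaussianPDFReal hσ.le]
  exact integrable_gaussianPDFReal _ _

theorem integrable_sub_mul_gaussDensity (hσ : 0 < σ) :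
    Integrable fun θ => (θ - μ) * gaussDensity μ σ θ := by
  have hb : 0 < 1 / (2 * σ ^ 2) := by positivity
  refine (((integrable_mul_exp_neg_mul_sq hb).comp_sub_right μ).const_mul
    (Real.sqrt (2 * π) * σ)⁻¹).congr (ae_of_all _ fun θ => ?_)
  dsimp only [gaussDensity]
  ring_nf

theorem hasDerivAt_gaussDensity (μ σ θ : ℝ) :
    HasDerivAt (gaussDensity μ σ) (-((θ - μ) / σ ^ 2) * gaussDensity μ σ θ) θ := by
  have h : HasDerivAt (fun x => -(x - μ) ^ 2 / (2 * σ ^ 2)) (-(2 * (θ - μ)) / (2 * σ ^ 2)) θ := by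
    simpa using (((hasDerivAt_id θ).sub_const μ).pow 2).neg.div_const (2 * σ ^ 2)
  refine (h.exp.const_mul (Real.sqrt (2 * π) * σ)⁻¹).congr_deriv ?_
  rw [show -(2 * (θ - μ)) / (2 * σ ^ 2) = -((θ - μ) / σ ^ 2) by
    rw [neg_div, mul_div_mul_left _ _ two_ne_zero], gaussDensity]
  ring

theorem integral_sub_mul_gaussDensity_mul (hσ : 0 < σ) {f : ℝ → ℝ} (hf : Differentiable ℝ f)
    {C C' : ℝ} (hfC : ∀ x, |f x| ≤ C) (hf'C : ∀ x, |deriv f x| ≤ C') :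
    ∫ θ, (θ - μ) * gaussDensity μ σ θ * f θ = σ ^ 2 * ∫ θ, gaussDensity μ σ θ * deriv f θ := by
  have hf_meas : AEStronglyMeasurable f := hf.continuous.aestronglyMeasurable
  have hf'_meas : AEStronglyMeasurable (deriv f) := (measurable_deriv f).aestronglyMeasurable
  have hp := integrable_gaussDensity (μ := μ) hσ
  have hp' : Integrable fun θ => -((θ - μ) / σ ^ 2) * gaussDensity μ σ θ :=
    ((integrable_sub_mul_gaussDensity (μ := μ) hσ).const_mul (-(σ ^ 2)⁻¹)).congr
      (ae_of_all _ fun θ => by ring)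
  have hparts := integral_mul_deriv_eq_deriv_mul_of_integrable
    (fun θ _ => hasDerivAt_gaussDensity μ σ θ) (fun θ _ => (hf θ).hasDerivAt)
    (hp.mul_bdd hf'_meas (ae_of_all _ hf'C)) (hp'.mul_bdd hf_meas (ae_of_all _ hfC))
    (hp.mul_bdd hf_meas (ae_of_all _ hfC))
  have hσ2 : σ ^ 2 ≠ 0 := by positivity
  rw [hparts, ← integral_neg, ← integral_const_mul]
  refine integral_congr_ae (ae_of_all _ fun θ => ?_)
  field_simp

theorem chiFun_eq_expBias_deriv (hσ : 0 < σ) {f : ℝ → ℝ} (hf : Differentiable ℝ f)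
    {C C' : ℝ} (hfC : ∀ x, |f x| ≤ C) (hf'C : ∀ x, |deriv f x| ≤ C') :
    chiFun f μ σ = expBias (deriv f) μ σ := by
  rw [chiFun, integral_sub_mul_gaussDensity_mul hσ hf hfC hf'C, expBias]
  field_simp

theorem integrable_of_continuous_of_abs_le {ν : Measure ℝ} [IsFiniteMeasure ν] {f : ℝ → ℝ}
    (hf : Continuous f) {C : ℝ} (hfC : ∀ x, |f x| ≤ C) : Integrable f ν :=
  Integrable.of_bound hf.aestronglyMeasurable C (ae_of_all _ hfC)

theorem integrable_cexp_mul_I {ν : Measure ℝ} [IsFiniteMeasure ν] (a : ℝ) :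
    Integrable (fun x : ℝ => Complex.exp (a * x * Complex.I)) ν :=
  Integrable.of_bound (by fun_prop) 1 (ae_of_all _ fun x => by
    rw [← Complex.ofReal_mul, Complex.norm_exp_ofReal_mul_I])

theorem integral_cos_mul_gaussianReal (μ : ℝ) (v : ℝ≥0) (a : ℝ) :
    ∫ x, cos (a * x) ∂gaussianReal μ v = exp (-(v * a ^ 2 / 2)) * cos (a * μ) := by
  have h := congrArg Complex.re (charFun_gaussianReal (μ := μ) (v := v) a)
  rw [charFun_apply_real, ← RCLike.re_eq_complex_re, ← integral_re (integrable_cexp_mul_I a)] at h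
  simp only [RCLike.re_to_complex, ← Complex.ofReal_mul, Complex.exp_ofReal_mul_I_re] at h
  rw [h, Complex.exp_re]
  simp [← Complex.ofReal_pow]

theorem integral_sin_mul_gaussianReal (μ : ℝ) (v : ℝ≥0) (a : ℝ) :
    ∫ x, sin (a * x) ∂gaussianReal μ v = exp (-(v * a ^ 2 / 2)) * sin (a * μ) := by
  have h := congrArg Complex.im (charFun_gaussianReal (μ := μ) (v := v) a)
  rw [charFun_apply_real, ← RCLike.im_eq_complex_im, ← integral_im (integrable_cexp_mul_I a)] at h
  simp only [RCLike.im_to_complex, ← Complex.ofReal_mul, Complex.exp_ofReal_mul_I_im] at h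
  rw [h, Complex.exp_im]
  simp [← Complex.ofReal_pow]

end Gaussian

section TrigSum

variable {ι : Type*} (s : Finset ι) (ω c d : ι → ℝ) {μ σ : ℝ}

theorem expBias_trigSum (hσ : 0 < σ) :
    expBias (trigSum s ω c d) μ σ = trigSum s ω (fun i => exp (-(ω i ^ 2 * σ ^ 2 / 2)) * c i)
      (fun i => exp (-(ω i ^ 2 * σ ^ 2 / 2)) * d i) μ := by
  have hcos (i : ι) : Integrable (fun x => cos (ω i * x)) (gaussianReal μ (σ ^ 2).toNNReal) :=
    integrable_of_continuous_of_abs_le (by fun_prop) fun _ => abs_cos_le_one _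
  have hsin (i : ι) : Integrable (fun x => sin (ω i * x)) (gaussianReal μ (σ ^ 2).toNNReal) :=
    integrable_of_continuous_of_abs_le (by fun_prop) fun _ => abs_sin_le_one _
  have hterm (i : ι) : Integrable (fun x => c i * cos (ω i * x) + d i * sin (ω i * x))
      (gaussianReal μ (σ ^ 2).toNNReal) := ((hcos i).const_mul _).add ((hsin i).const_mul _)
  simp only [expBias_eq_integral_gaussianReal hσ, trigSum]
  rw [integral_finsetSum _ fun i _ => hterm i]
  refine Finset.sum_congr rfl fun i _ => ?_
  rw [integral_add ((hcos i).const_mul _) ((hsin i).const_mul _), integral_const_mul,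
    integral_const_mul, integral_cos_mul_gaussianReal, integral_sin_mul_gaussianReal,
    Real.coe_toNNReal _ (sq_nonneg σ)]
  ring_nf

theorem hasSum_iteratedDeriv_trigSum (μ σ : ℝ) :
    HasSum (fun j : ℕ =>
        iteratedDeriv (2 * j) (trigSum s ω c d) μ * σ ^ (2 * j) / (2 ^ j * j.factorial))
      (trigSum s ω (fun i => exp (-(ω i ^ 2 * σ ^ 2 / 2)) * c i)
        (fun i => exp (-(ω i ^ 2 * σ ^ 2 / 2)) * d i) μ) := by
  simp only [trigSum.iteratedDeriv_two_mul, trigSum, Finset.sum_mul, Finset.sum_div]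
  refine hasSum_sum fun i _ => ?_
  have hexp := NormedSpace.expSeries_div_hasSum_exp (-(ω i ^ 2 * σ ^ 2 / 2))
  rw [← Real.exp_eq_exp_ℝ] at hexp
  rw [mul_assoc, mul_assoc, ← mul_add]
  refine (hexp.mul_right (c i * cos (ω i * μ) + d i * sin (ω i * μ))).congr_fun fun j => ?_
  rw [show -(ω i ^ 2 * σ ^ 2 / 2) = -ω i ^ 2 * σ ^ 2 / 2 by ring, div_pow, mul_pow, ← pow_mul]
  field_simp

theorem hasSum_expBias_trigSum (hσ : 0 < σ) :
    HasSum (fun j : ℕ =>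
        iteratedDeriv (2 * j) (trigSum s ω c d) μ * σ ^ (2 * j) / (2 ^ j * j.factorial))
      (expBias (trigSum s ω c d) μ σ) := by
  rw [expBias_trigSum s ω c d hσ]
  exact hasSum_iteratedDeriv_trigSum s ω c d μ σ

theorem chiFun_trigSum (hσ : 0 < σ) :
    chiFun (trigSum s ω c d) μ σ
      = expBias (trigSum s ω (fun i => ω i * d i) (fun i => -(ω i * c i))) μ σ := by
  rw [chiFun_eq_expBias_deriv hσ (trigSum.differentiable s ω c d) (trigSum.abs_le s ω c d)
    (by rw [trigSum.deriv_eq]; exact trigSum.abs_le _ _ _ _), trigSum.deriv_eq]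

end TrigSum

/-- for a trigonometric polynomial bias, the expected bias and the chi function
are given by the convergent series `Σ_j Λ^{(2j)}(μ) σ^{2j}/(2j)!!` and
`Σ_j Λ^{(2j+1)}(μ) σ^{2j}/(2j)!!`, where `(2j)!! = 2^j j!`. -/
theorem statement6 (N : ℕ) (c d : ℕ → ℝ) (Λ : ℝ → ℝ)
    (hΛ : ∀ θ, Λ θ = ∑ l ∈ Finset.range (N + 1),
      (c l * Real.cos (l * θ) + d l * Real.sin (l * θ))) :
    ∀ (μ : ℝ) (σ : ℝ), 0 < σ →
      Summable (fun j : ℕ =>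
        iteratedDeriv (2 * j) Λ μ * σ ^ (2 * j) / (2 ^ j * (Nat.factorial j))) ∧
      Summable (fun j : ℕ =>
        iteratedDeriv (2 * j + 1) Λ μ * σ ^ (2 * j) / (2 ^ j * (Nat.factorial j))) ∧
      expBias Λ μ σ = ∑' j : ℕ,
        iteratedDeriv (2 * j) Λ μ * σ ^ (2 * j) / (2 ^ j * (Nat.factorial j)) ∧
      chiFun Λ μ σ = ∑' j : ℕ,
        iteratedDeriv (2 * j + 1) Λ μ * σ ^ (2 * j) / (2 ^ j * (Nat.factorial j)) := by
  intro μ σ hσ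
  obtain rfl : Λ = trigSum (Finset.range (N + 1)) (fun l => (l : ℝ)) c d := funext hΛ
  have hb := hasSum_expBias_trigSum (μ := μ) (Finset.range (N + 1)) (fun l => (l : ℝ)) c d hσ
  have hχ := hasSum_expBias_trigSum (μ := μ) (Finset.range (N + 1)) (fun l => (l : ℝ))
    (fun l => l * d l) (fun l => -(l * c l)) hσ
  rw [← chiFun_trigSum _ _ _ _ hσ, ← trigSum.deriv_eq] at hχ
  simp only [← iteratedDeriv_succ'] at hχ
  exact ⟨hb.summable, hχ.summable, hb.tsum_eq.symm, hχ.tsum_eq.symm⟩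
end

section
/- Let q ≥ 1 be an integer and σ > 0. Then for all μ ∈ ℝ, V_q(μ,σ) ≤ q² exp(−q²σ²), with equality if and only if μ = nπ/(2q) for some odd integer n. Consequently V_q(μ,σ) ≤ 1/(e σ²) for all μ ∈ ℝ, with equality if and only if qσ = 1 and μ = nπ/(2q) for some odd integer n. -/
/-- The Chebyshev variance reduction factor
`V_q(μ,σ) = q² sin²(qμ) / (exp(q²σ²) − cos²(qμ))`. -/
noncomputable def Vq (q : ℕ) (μ σ : ℝ) : ℝ :=
  (q : ℝ) ^ 2 * Real.sin ((q : ℝ) * μ) ^ 2 /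
    (Real.exp ((q : ℝ) ^ 2 * σ ^ 2) - Real.cos ((q : ℝ) * μ) ^ 2)

/-- upper bound `q² exp(−q²σ²)` for the Chebyshev variance reduction factor,
with equality iff μ is an odd multiple of π/(2q); consequently the bound `1/(e σ²)`,
with equality iff qσ = 1 and μ is an odd multiple of π/(2q). -/
theorem statement9 (q : ℕ) (hq : 1 ≤ q) (σ : ℝ) (hσ : 0 < σ) :
    (∀ μ : ℝ, Vq q μ σ ≤ (q : ℝ) ^ 2 * Real.exp (-((q : ℝ) ^ 2 * σ ^ 2))) ∧
    (∀ μ : ℝ, Vq q μ σ = (q : ℝ) ^ 2 * Real.exp (-((q : ℝ) ^ 2 * σ ^ 2)) ↔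
      ∃ n : ℤ, Odd n ∧ μ = n * Real.pi / (2 * q)) ∧
    (∀ μ : ℝ, Vq q μ σ ≤ 1 / (Real.exp 1 * σ ^ 2)) ∧
    (∀ μ : ℝ, Vq q μ σ = 1 / (Real.exp 1 * σ ^ 2) ↔
      ((q : ℝ) * σ = 1 ∧ ∃ n : ℤ, Odd n ∧ μ = n * Real.pi / (2 * q))) := by
  have hq' : (1:ℝ) ≤ (q:ℝ) := by exact_mod_cast hq
  have hq0 : (0:ℝ) < (q:ℝ) := lt_of_lt_of_le one_pos hq'
  set t : ℝ := (q:ℝ)^2 * σ^2 with ht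
  clear_value t
  have ht0 : 0 < t := by rw [ht]; positivity
  have hE1 : 1 < Real.exp t := by
    calc (1:ℝ) = Real.exp 0 := (Real.exp_zero).symm
    _ < Real.exp t := Real.exp_lt_exp.mpr ht0
  have hEpos : 0 < Real.exp t := Real.exp_pos t
  -- Key pointwise facts
  have key : ∀ μ : ℝ, Vq q μ σ ≤ (q : ℝ) ^ 2 * Real.exp (-t) ∧
      (Vq q μ σ = (q : ℝ) ^ 2 * Real.exp (-t) ↔ Real.cos ((q:ℝ)*μ) = 0) := by
    intro μ
    have hsc : Real.sin ((q:ℝ)*μ)^2 + Real.cos ((q:ℝ)*μ)^2 = 1 :=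
      Real.sin_sq_add_cos_sq _
    set s := Real.sin ((q:ℝ)*μ)^2 with hs
    set c := Real.cos ((q:ℝ)*μ)^2 with hc
    clear_value s c
    have hc0 : 0 ≤ c := by rw [hc]; positivity
    have hs0 : 0 ≤ s := by rw [hs]; positivity
    have hD : 0 < Real.exp t - c := by nlinarith
    have hV : Vq q μ σ = (q:ℝ)^2 * s / (Real.exp t - c) := by
      rw [hs, hc, ht]; rfl
    have hR : (q : ℝ) ^ 2 * Real.exp (-t) = (q:ℝ)^2 / Real.exp t := by
      rw [Real.exp_neg]; ring
    have hs1 : s = 1 - c := by linarith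
    have hdiff : (q:ℝ)^2*s*Real.exp t - (q:ℝ)^2*(Real.exp t - c)
        = -((q:ℝ)^2 * (c * (Real.exp t - 1))) := by rw [hs1]; ring
    have hnn : 0 ≤ (q:ℝ)^2 * (c * (Real.exp t - 1)) := by
      have := mul_nonneg hc0 (sub_nonneg.mpr hE1.le)
      positivity
    constructor
    · rw [hV, hR, div_le_div_iff₀ hD hEpos]
      linarith
    · rw [hV, hR, div_eq_div_iff hD.ne' hEpos.ne']
      constructor
      · intro h
        have hz : (q:ℝ)^2 * (c * (Real.exp t - 1)) = 0 := by linarith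
        have hcz : c = 0 := by
          rcases mul_eq_zero.mp hz with h1 | h1
          · exfalso; nlinarith
          · rcases mul_eq_zero.mp h1 with h2 | h2
            · exact h2
            · exfalso; linarith
        rw [hc] at hcz
        exact pow_eq_zero_iff (n := 2) (by norm_num) |>.mp hcz
      · intro h
        have hcz : c = 0 := by rw [hc, h]; ring
        rw [hs1, hcz]; ring
  -- cos (qμ) = 0 ↔ odd multiple characterization
  have hcosiff : ∀ μ : ℝ, Real.cos ((q:ℝ)*μ) = 0 ↔
      ∃ n : ℤ, Odd n ∧ μ = n * Real.pi / (2 * q) := by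
    intro μ
    rw [Real.cos_eq_zero_iff]
    constructor
    · rintro ⟨k, hk⟩
      refine ⟨2*k+1, ⟨k, by ring⟩, ?_⟩
      have : (q:ℝ) * μ = (2 * (k:ℝ) + 1) * Real.pi / 2 := hk
      field_simp at this ⊢
      push_cast
      linarith
    · rintro ⟨n, ⟨k, hk⟩, hμ⟩
      refine ⟨k, ?_⟩
      subst hk hμ
      have hq0' : (q:ℝ) ≠ 0 := ne_of_gt hq0
      field_simp
      push_cast
      ring
  -- t * exp(-t) ≤ exp(-1), equality iff t = 1
  have hte : t * Real.exp (-t) ≤ Real.exp (-1) ∧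
      (t * Real.exp (-t) = Real.exp (-1) ↔ t = 1) := by
    have h1 : t ≤ Real.exp (t - 1) := by
      have := Real.add_one_le_exp (t - 1)
      linarith
    have hmul : Real.exp (t-1) * Real.exp (-t) = Real.exp (-1) := by
      rw [← Real.exp_add]; ring_nf
    have hle : t * Real.exp (-t) ≤ Real.exp (-1) := by
      calc t * Real.exp (-t) ≤ Real.exp (t-1) * Real.exp (-t) :=
            mul_le_mul_of_nonneg_right h1 (Real.exp_pos _).le
        _ = Real.exp (-1) := hmul
    refine ⟨hle, ?_, ?_⟩
    · intro h
      by_contra hne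
      have h2 : t + 1 - 1 < Real.exp (t - 1) := by
        have := Real.add_one_lt_exp (x := t - 1) (by intro hz; apply hne; linarith)
        linarith
      have : t * Real.exp (-t) < Real.exp (-1) := by
        calc t * Real.exp (-t) < Real.exp (t-1) * Real.exp (-t) :=
              mul_lt_mul_of_pos_right (by linarith) (Real.exp_pos _)
          _ = Real.exp (-1) := hmul
      linarith
    · intro h; rw [h]; simp
  -- q² exp(-t) vs 1/(eσ²)
  have hσ2 : (0:ℝ) < σ^2 := by positivity
  have hqt : (q:ℝ)^2 * Real.exp (-t) = t * Real.exp (-t) / σ^2 := by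
    rw [ht]; field_simp
  have h2le : (q:ℝ)^2 * Real.exp (-t) ≤ 1 / (Real.exp 1 * σ^2) := by
    rw [hqt]
    have : Real.exp (-1) = 1 / Real.exp 1 := by
      rw [Real.exp_neg]; exact inv_eq_one_div _
    rw [div_le_div_iff₀ hσ2 (by positivity)]
    calc t * Real.exp (-t) * (Real.exp 1 * σ^2)
        ≤ Real.exp (-1) * (Real.exp 1 * σ^2) := by
          exact mul_le_mul_of_nonneg_right hte.1 (by positivity)
      _ = 1 * σ^2 := by rw [Real.exp_neg]; field_simp
  have h2eq : ((q:ℝ)^2 * Real.exp (-t) = 1 / (Real.exp 1 * σ^2)) ↔ (q:ℝ) * σ = 1 := by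
    constructor
    · intro h
      rw [hqt] at h
      have hteq : t * Real.exp (-t) = Real.exp (-1) := by
        have h' : t * Real.exp (-t) = σ^2 / (Real.exp 1 * σ^2) := by
          field_simp at h ⊢; linarith
        rw [h', Real.exp_neg]
        rw [eq_comm, inv_eq_iff_eq_inv, eq_comm, inv_div]
        rw [mul_div_assoc, div_self hσ2.ne']
        simp
      have ht1 : t = 1 := hte.2.mp hteq
      have hsq : ((q:ℝ) * σ)^2 = 1 := by rw [mul_pow]; linarith [ht]
      have h3 : ((q:ℝ)*σ - 1) * ((q:ℝ)*σ + 1) = 0 := by nlinarith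
      rcases mul_eq_zero.mp h3 with h4 | h4
      · linarith
      · nlinarith [mul_pos hq0 hσ]
    · intro h
      have hq2 : (q:ℝ)^2 * σ^2 = 1 := by nlinarith
      have ht1 : t = 1 := by rw [ht]; exact hq2
      rw [ht1, Real.exp_neg, eq_div_iff (by positivity : Real.exp 1 * σ ^ 2 ≠ 0)]
      have he : (Real.exp 1)⁻¹ * Real.exp 1 = 1 := inv_mul_cancel₀ (Real.exp_ne_zero 1)
      linear_combination (Real.exp 1)⁻¹ * Real.exp 1 * hq2 + he
  refine ⟨fun μ => (key μ).1, fun μ => ((key μ).2).trans (hcosiff μ), ?_, ?_⟩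
  · intro μ
    exact le_trans (key μ).1 h2le
  · intro μ
    constructor
    · intro h
      have h1 : Vq q μ σ = (q:ℝ)^2 * Real.exp (-t) := by
        linarith [(key μ).1, h2le]
      exact ⟨h2eq.mp (by linarith), (hcosiff μ).mp ((key μ).2.mp h1)⟩
    · rintro ⟨hqσ, hodd⟩
      have h1 : Vq q μ σ = (q:ℝ)^2 * Real.exp (-t) :=
        (key μ).2.mpr ((hcosiff μ).mpr hodd)
      rw [h1]
      exact h2eq.mpr hqσ
end

section
/- Let n ≥ 1, u, v ∈ {0,1} and k ∈ ℕ. Then Θⁿ_{ukv} ≠ ∅ if and only if k ≤ n/2 − 1 when n is even, and k ≤ (n−1)/2 − u when n is odd. -/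
/-- The generator `p` of the infinite dihedral group `C₂ * C₂`, realized as the
reflection `sr 0` in `DihedralGroup 0`. -/
def pgen : DihedralGroup 0 := DihedralGroup.sr 0

/-- The generator `q` of the infinite dihedral group `C₂ * C₂`, realized as the
reflection `sr 1` in `DihedralGroup 0`. -/
def qgen : DihedralGroup 0 := DihedralGroup.sr 1

/-- `g^b` for a bit `b`: `g⁰ = 1`, `g¹ = g`. -/
def bpow (g : DihedralGroup 0) (b : Bool) : DihedralGroup 0 := if b then g else 1

/-- The generator at (0-based) index `i`, i.e. at 1-based position `i+1`:
`q` at odd positions, `p` at even positions. -/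
def genAt (i : ℕ) : DihedralGroup 0 := if i % 2 = 0 then qgen else pgen

/-- The word `w(x) = r_n^{x_n} ⋯ r_2^{x_2} r_1^{x_1}` associated with a bit string
`x = x₁…x_n`, where `r_i = q` if `i` is odd and `r_i = p` if `i` is even. -/
def wword {n : ℕ} (x : Fin n → Bool) : DihedralGroup 0 :=
  ((List.finRange n).reverse.map (fun i => bpow (genAt i.val) (x i))).prod

/-- The reduced word `t(u,k,v) = p^u (qp)^k q^v`. -/
def tword (u : Bool) (k : ℕ) (v : Bool) : DihedralGroup 0 :=
  bpow pgen u * (qgen * pgen) ^ k * bpow qgen v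

/-- `Θⁿ_{ukv}` : the set of bit strings `x` of length `n` with `w(x) = p^u (qp)^k q^v`,
empty by convention when `k < 0`. -/
def Theta (n : ℕ) (u : Bool) (k : ℤ) (v : Bool) : Finset (Fin n → Bool) :=
  if k < 0 then ∅ else Finset.univ.filter (fun x => wword x = tword u k.toNat v)

/-- `Ξ_l^α = Θ^α_{0,l,0} ∪ Θ^α_{1,l,0} ∪ Θ^α_{0,l−1,1} ∪ Θ^α_{1,l−1,1}`. -/
def Xi (α l : ℕ) : Finset (Fin α → Bool) :=
  Theta α false l false ∪ Theta α true l false ∪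
    Theta α false ((l : ℤ) - 1) true ∪ Theta α true ((l : ℤ) - 1) true

/-! In `DihedralGroup 0` every element is a rotation `r j` or a reflection `sr j`, and `p = sr 0`,
`q = sr 1`. Appending a bit to `x` either leaves `w(x)` unchanged or multiplies it on the left by
the next generator `sr i`, which sends `r j ↦ sr (i + j)` and `sr j ↦ r (j - i)`. Since the
generators alternate, induction on `n ≥ 1` shows that the words of length `n` are exactly the
rotations `r j` with `1 - ⌈n/2⌉ ≤ j ≤ ⌊n/2⌋` and the reflections `sr j` with
`1 - ⌊n/2⌋ ≤ j ≤ ⌈n/2⌉`. As `t(u,k,v)` is `r (-k)`, `sr (-k)`, `sr (1 + k)`, `r (1 + k)` for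
`(u,v) = (0,0), (1,0), (0,1), (1,1)`, the bound on `k` follows. -/

open DihedralGroup

namespace InfiniteDihedral

/-- `DihedralGroup 0` is indexed by `ZMod 0`, which is `ℤ` only up to unfolding; indexing by `ℤ`
keeps all index arithmetic in `ℤ`. -/
def rot (j : ℤ) : DihedralGroup 0 := r j

def refl (j : ℤ) : DihedralGroup 0 := sr j

lemma rot_mul_rot (i j : ℤ) : rot i * rot j = rot (i + j) := r_mul_r (n := 0) i j

lemma rot_mul_refl (i j : ℤ) : rot i * refl j = refl (j - i) := r_mul_sr (n := 0) i j

lemma refl_mul_rot (i j : ℤ) : refl i * rot j = refl (i + j) := sr_mul_r (n := 0) i j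

lemma refl_mul_refl (i j : ℤ) : refl i * refl j = rot (j - i) := sr_mul_sr (n := 0) i j

lemma rot_inj {i j : ℤ} : rot i = rot j ↔ i = j := ⟨fun h => r.inj h, congrArg rot⟩

lemma refl_ne_rot (i j : ℤ) : refl i ≠ rot j := by simp [refl, rot]

lemma one_eq_rot_zero : (1 : DihedralGroup 0) = rot 0 := rfl

end InfiniteDihedral

open InfiniteDihedral

lemma pgen_eq_refl : pgen = refl 0 := rfl

lemma qgen_eq_refl : qgen = refl 1 := rfl

lemma genAt_of_even {i : ℕ} (hi : i % 2 = 0) : genAt i = qgen := if_pos hi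

lemma genAt_of_odd {i : ℕ} (hi : i % 2 = 1) : genAt i = pgen := if_neg (by omega)

lemma genAt_mul_self (i : ℕ) : genAt i * genAt i = 1 := by
  unfold genAt
  split <;> exact sr_mul_self _

lemma wword_zero (x : Fin 0 → Bool) : wword x = 1 := rfl

lemma wword_succ {n : ℕ} (x : Fin (n + 1) → Bool) :
    wword x = bpow (genAt n) (x (Fin.last n)) * wword (fun i : Fin n => x i.castSucc) := by
  simp [wword, List.finRange_succ_last, Function.comp_def]

def IsWord (n : ℕ) (g : DihedralGroup 0) : Prop := ∃ x : Fin n → Bool, wword x = g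

lemma isWord_zero_iff (g : DihedralGroup 0) : IsWord 0 g ↔ g = 1 :=
  ⟨fun ⟨x, hx⟩ => hx ▸ wword_zero x, fun hg => ⟨Fin.elim0, hg ▸ wword_zero _⟩⟩

lemma isWord_succ_iff (n : ℕ) (g : DihedralGroup 0) :
    IsWord (n + 1) g ↔ IsWord n g ∨ IsWord n (genAt n * g) := by
  have cancel : ∀ h, genAt n * (genAt n * h) = h := fun h => by
    rw [← mul_assoc, genAt_mul_self, one_mul]
  constructor
  · rintro ⟨x, rfl⟩
    rw [wword_succ]
    cases x (Fin.last n)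
    · exact Or.inl ⟨_, (one_mul _).symm⟩
    · exact Or.inr ⟨_, (cancel _).symm⟩
  · rintro (⟨y, rfl⟩ | ⟨y, hy⟩)
    · exact ⟨Fin.snoc y false, by simp [wword_succ, bpow]⟩
    · refine ⟨Fin.snoc y true, ?_⟩
      simp [wword_succ, bpow, hy, cancel]

theorem isWord_rot_iff_and_isWord_refl_iff {n : ℕ} (hn : 1 ≤ n) (j : ℤ) :
    (IsWord n (rot j) ↔ 1 - ((n + 1) / 2 : ℕ) ≤ j ∧ j ≤ (n / 2 : ℕ)) ∧
      (IsWord n (refl j) ↔ 1 - (n / 2 : ℕ) ≤ j ∧ j ≤ ((n + 1) / 2 : ℕ)) := by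
  induction n, hn using Nat.le_induction generalizing j with
  | base =>
    simp only [isWord_succ_iff, isWord_zero_iff, genAt_of_even (Nat.zero_mod 2), qgen_eq_refl,
      refl_mul_rot, refl_mul_refl, one_eq_rot_zero, rot_inj, refl_ne_rot, or_false, false_or]
    omega
  | succ n _ ih =>
    rcases Nat.mod_two_eq_zero_or_one n with hn | hn
    · simp only [isWord_succ_iff, genAt_of_even hn, qgen_eq_refl, refl_mul_rot, refl_mul_refl,
        (ih _).1, (ih _).2]
      omega
    · simp only [isWord_succ_iff, genAt_of_odd hn, pgen_eq_refl, refl_mul_rot, refl_mul_refl,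
        (ih _).1, (ih _).2]
      omega

lemma qgen_mul_pgen_pow (k : ℕ) : (qgen * pgen) ^ k = rot (-k) := by
  induction k with
  | zero => rfl
  | succ k ih =>
    rw [pow_succ, ih, qgen_eq_refl, pgen_eq_refl, refl_mul_refl, rot_mul_rot]
    congr 1
    push_cast
    ring

lemma tword_false_false (k : ℕ) : tword false k false = rot (-k) := by
  rw [tword, qgen_mul_pgen_pow]
  simp [bpow]

lemma tword_true_false (k : ℕ) : tword true k false = refl (-k) := by
  rw [tword, qgen_mul_pgen_pow]
  simp [bpow, pgen_eq_refl, refl_mul_rot]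

lemma tword_false_true (k : ℕ) : tword false k true = refl (1 + k) := by
  rw [tword, qgen_mul_pgen_pow]
  simp [bpow, qgen_eq_refl, rot_mul_refl]

lemma tword_true_true (k : ℕ) : tword true k true = rot (1 + k) := by
  rw [tword, qgen_mul_pgen_pow]
  simp [bpow, pgen_eq_refl, qgen_eq_refl, refl_mul_rot, refl_mul_refl]

lemma theta_nonempty_iff (n : ℕ) (u : Bool) (k : ℕ) (v : Bool) :
    (Theta n u k v).Nonempty ↔ IsWord n (tword u k v) := by
  rw [Theta, if_neg (by omega)]
  simp [IsWord, Finset.filter_nonempty_iff]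

/-- `Θⁿ_{ukv} ≠ ∅` iff `k ≤ n/2 − 1` when `n` is even, and
`k ≤ (n−1)/2 − u` when `n` is odd. -/
theorem statement11 (n : ℕ) (hn : 1 ≤ n) (u v : Bool) (k : ℕ) :
    (Theta n u (k : ℤ) v).Nonempty ↔
      (if n % 2 = 0 then (k : ℤ) ≤ (n : ℤ) / 2 - 1
       else (k : ℤ) ≤ ((n : ℤ) - 1) / 2 - (if u then 1 else 0)) := by
  have isWord_rot_iff := fun j => (isWord_rot_iff_and_isWord_refl_iff hn j).1
  have isWord_refl_iff := fun j => (isWord_rot_iff_and_isWord_refl_iff hn j).2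
  rw [theta_nonempty_iff]
  cases u <;> cases v <;>
    simp only [tword_false_false, tword_true_false, tword_false_true, tword_true_true,
      isWord_rot_iff, isWord_refl_iff, Bool.false_eq_true, if_true, if_false] <;>
    split_ifs <;> omega
end

section
/- Let m ≥ 1, u, v ∈ {0,1} and k ∈ ℕ. Then |Θ^{2m}_{ukv}| = C(2m−1, m+k) and |Θ^{2m+1}_{ukv}| = C(2m, m+u+k), where C(n,r) denotes the binomial coefficient (which vanishes when r > n). In particular |Θ^{2m}_{ukv}| = C(2m−1, m−1−k) for 0 ≤ k ≤ m−1 and |Θ^{2m+1}_{ukv}| = C(2m, m−u−k) for 0 ≤ k ≤ m−u. -/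
/-- Integer-indexed binomial coefficient. -/
def B (n : ℕ) (j : ℤ) : ℕ := if 0 ≤ j then n.choose j.toNat else 0

lemma B_natCast (n j : ℕ) : B n (j : ℤ) = n.choose j := by simp [B]

lemma B_neg (n : ℕ) {j : ℤ} (h : j < 0) : B n j = 0 := by simp [B, not_le.2 h]

lemma B_pascal (n : ℕ) (j : ℤ) : B (n+1) j = B n j + B n (j - 1) := by
  rcases lt_trichotomy j 0 with h | h | h
  · rw [B_neg _ h, B_neg _ h, B_neg _ (by omega)]
  · subst h
    norm_num [B]
  · obtain ⟨j', rfl⟩ : ∃ j' : ℕ, j = (j' : ℤ) + 1 := ⟨(j-1).toNat, by omega⟩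
    have h1 : ((j':ℤ)+1) - 1 = (j' : ℤ) := by ring
    have h2 : ((j':ℤ)+1) = ((j'+1 : ℕ) : ℤ) := by push_cast; ring
    rw [h1, h2, B_natCast, B_natCast, B_natCast, Nat.choose_succ_succ, add_comm]

/-- number of length-`n` bit strings whose word is `g` -/
def Cnt (n : ℕ) (g : DihedralGroup 0) : ℕ :=
  (Finset.univ.filter (fun x : Fin n → Bool => wword x = g)).card

lemma wword_snoc (n : ℕ) (y : Fin n → Bool) (b : Bool) :
    wword (Fin.snoc y b) = bpow (genAt n) b * wword y := by
  unfold wword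
  rw [List.map_reverse, List.map_reverse, ← List.ofFn_eq_map, ← List.ofFn_eq_map,
    List.ofFn_succ',
    List.concat_eq_append, List.reverse_append]
  simp only [List.reverse_cons, List.reverse_nil, List.nil_append, List.map_cons,
    List.prod_cons, List.singleton_append, Fin.snoc_last, Fin.val_last]
  congr 1
  simp only [List.ofFn_eq_map]
  congr 1
  congr 1
  apply List.map_congr_left
  intro i _
  simp [Fin.snoc_castSucc]

/-- the equivalence `(Fin n → Bool) × Bool ≃ (Fin (n+1) → Bool)` by `snoc` -/
def snocE (n : ℕ) : (Fin n → Bool) × Bool ≃ (Fin (n+1) → Bool) where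
  toFun yb := Fin.snoc yb.1 yb.2
  invFun x := (x ∘ Fin.castSucc, x (Fin.last n))
  left_inv yb := by
    ext i
    · simp [Fin.snoc_castSucc]
    · simp [Fin.snoc_last]
  right_inv x := by
    funext i
    induction i using Fin.lastCases with
    | last => simp [Fin.snoc_last]
    | cast i => simp [Fin.snoc_castSucc]

lemma genAt_sq (n : ℕ) : genAt n * genAt n = 1 := by
  unfold genAt pgen qgen
  split <;> rw [DihedralGroup.sr_mul_sr, sub_self, DihedralGroup.one_def]

lemma cnt_succ (n : ℕ) (g : DihedralGroup 0) :
    Cnt (n+1) g = Cnt n g + Cnt n (genAt n * g) := by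
  unfold Cnt
  rw [Finset.card_filter, Finset.card_filter, Finset.card_filter]
  rw [← Fintype.sum_equiv (snocE n)
      (fun yb => if wword (snocE n yb) = g then 1 else 0)
      (fun x => if wword x = g then 1 else 0) (fun yb => rfl)]
  rw [Fintype.sum_prod_type]
  have key : ∀ y : Fin n → Bool, ∀ b : Bool,
      (if wword (snocE n (y, b)) = g then 1 else 0)
        = if b then (if wword y = genAt n * g then 1 else 0)
          else (if wword y = g then 1 else 0) := by
    intro y b
    have hs : wword (snocE n (y, b)) = bpow (genAt n) b * wword y := wword_snoc n y b
    cases b with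
    | false => simp [hs, bpow]
    | true =>
      simp only [hs, bpow, if_true]
      congr 1
      apply propext
      constructor
      · intro h; rw [← h, ← mul_assoc, genAt_sq, one_mul]
      · intro h; rw [h, ← mul_assoc, genAt_sq, one_mul]
  have : ∀ y : Fin n → Bool, ∑ b : Bool, (if wword (snocE n (y, b)) = g then 1 else 0)
      = (if wword y = g then 1 else 0) + (if wword y = genAt n * g then 1 else 0) := by
    intro y
    rw [Fintype.sum_bool, key y true, key y false]
    simp [add_comm]
  simp only [this, Finset.sum_add_distrib]


lemma B_congr (n : ℕ) {j j' : ℤ} (h : j = j') : B n j = B n j' := by rw [h]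

lemma B_zero' (j : ℤ) : B 0 j = if j = 0 then 1 else 0 := by
  rcases lt_trichotomy j 0 with h | h | h
  · rw [B_neg _ h, if_neg (by omega)]
  · subst h; simp [B]
  · rw [if_neg (by omega)]
    unfold B
    rw [if_pos (le_of_lt h)]
    exact Nat.choose_eq_zero_of_lt (by omega)

/-- `r`/`sr` with integer arguments. -/
def R (a : ℤ) : DihedralGroup 0 := DihedralGroup.r a
def S (a : ℤ) : DihedralGroup 0 := DihedralGroup.sr a

lemma S_mul_R (i j : ℤ) : S i * R j = S (i + j) := rfl
lemma S_mul_S (i j : ℤ) : S i * S j = R (j - i) := rfl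
lemma R_mul_S (i j : ℤ) : R i * S j = S (j - i) := rfl
lemma R_mul_R (i j : ℤ) : R i * R j = R (i + j) := rfl
lemma one_eq_R : (1 : DihedralGroup 0) = R 0 := rfl
lemma qgen_eq : qgen = S 1 := rfl
lemma pgen_eq : pgen = S 0 := rfl

lemma R_inj {a b : ℤ} (h : R a = R b) : a = b := by
  cases h; rfl

lemma R_ne_S (a b : ℤ) : R a ≠ S b := fun h => by cases h

lemma qgen_mul_R (a : ℤ) : qgen * R a = S (1 + a) := by rw [qgen_eq, S_mul_R]
lemma qgen_mul_S (a : ℤ) : qgen * S a = R (a - 1) := by rw [qgen_eq, S_mul_S]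
lemma pgen_mul_R (a : ℤ) : pgen * R a = S a := by rw [pgen_eq, S_mul_R, zero_add]
lemma pgen_mul_S (a : ℤ) : pgen * S a = R a := by rw [pgen_eq, S_mul_S, sub_zero]

lemma R_pow (b : ℤ) (k : ℕ) : (R b) ^ k = R ((k : ℤ) * b) := by
  induction k with
  | zero => rw [pow_zero, one_eq_R]; norm_num
  | succ k ih =>
    rw [pow_succ, ih, R_mul_R]
    congr 1
    push_cast
    ring

lemma cnt_zero_R (a : ℤ) : Cnt 0 (R a) = if a = 0 then 1 else 0 := by
  unfold Cnt
  have hw : ∀ x : Fin 0 → Bool, wword x = R 0 := by intro x; rfl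
  simp only [hw]
  by_cases hg : a = 0
  · subst hg
    rw [Finset.filter_true_of_mem (fun _ _ => rfl), if_pos rfl, Finset.card_univ]
    simp
  · rw [Finset.filter_false_of_mem, if_neg hg, Finset.card_empty]
    exact fun x _ h => hg (R_inj h).symm

lemma cnt_zero_S (a : ℤ) : Cnt 0 (S a) = 0 := by
  unfold Cnt
  have hw : ∀ x : Fin 0 → Bool, wword x = R 0 := by intro x; rfl
  rw [Finset.filter_false_of_mem, Finset.card_empty]
  intro x _
  rw [hw]
  exact R_ne_S 0 a

lemma cnt_formula (n : ℕ) : ∀ a : ℤ,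
    Cnt (n+1) (R a) = B n ((((n+1)/2 : ℕ) : ℤ) - a) ∧
    Cnt (n+1) (S a) = B n ((((n+2)/2 : ℕ) : ℤ) - a) := by
  induction n with
  | zero =>
    intro a
    have hg : genAt 0 = qgen := rfl
    constructor
    · rw [cnt_succ, hg, qgen_mul_R, cnt_zero_R, cnt_zero_S, B_zero', add_zero]
      exact if_congr (by constructor <;> (intro h; omega)) rfl rfl
    · rw [cnt_succ, hg, qgen_mul_S, cnt_zero_S, cnt_zero_R, B_zero', zero_add]
      exact if_congr (by constructor <;> (intro h; omega)) rfl rfl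
  | succ n ih =>
    intro a
    rcases Nat.even_or_odd (n+1) with he | ho
    · have hmod : (n+1) % 2 = 0 := Nat.even_iff.mp he
      have hg : genAt (n+1) = qgen := by unfold genAt; rw [if_pos hmod]
      constructor
      · rw [cnt_succ, hg, qgen_mul_R, (ih a).1, (ih (1+a)).2, B_pascal]
        rw [B_congr n (show (((n+1)/2 : ℕ) : ℤ) - a = (((n+1+1)/2 : ℕ) : ℤ) - a by omega),
          B_congr n (show (((n+2)/2 : ℕ) : ℤ) - (1+a) = (((n+1+1)/2 : ℕ) : ℤ) - a - 1 by omega)]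
      · rw [cnt_succ, hg, qgen_mul_S, (ih a).2, (ih (a-1)).1, B_pascal, add_comm]
        rw [B_congr n (show (((n+1)/2 : ℕ) : ℤ) - (a-1) = (((n+1+2)/2 : ℕ) : ℤ) - a by omega),
          B_congr n (show (((n+2)/2 : ℕ) : ℤ) - a = (((n+1+2)/2 : ℕ) : ℤ) - a - 1 by omega)]
    · have hmod : (n+1) % 2 = 1 := Nat.odd_iff.mp ho
      have hg : genAt (n+1) = pgen := by unfold genAt; rw [if_neg (by omega)]
      constructor
      · rw [cnt_succ, hg, pgen_mul_R, (ih a).1, (ih a).2, B_pascal, add_comm]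
        rw [B_congr n (show (((n+2)/2 : ℕ) : ℤ) - a = (((n+1+1)/2 : ℕ) : ℤ) - a by omega),
          B_congr n (show (((n+1)/2 : ℕ) : ℤ) - a = (((n+1+1)/2 : ℕ) : ℤ) - a - 1 by omega)]
      · rw [cnt_succ, hg, pgen_mul_S, (ih a).2, (ih a).1, B_pascal]
        rw [B_congr n (show (((n+1)/2 : ℕ) : ℤ) - a = (((n+1+2)/2 : ℕ) : ℤ) - a - 1 by omega),
          B_congr n (show (((n+2)/2 : ℕ) : ℤ) - a = (((n+1+2)/2 : ℕ) : ℤ) - a by omega)]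

lemma qp_eq (k : ℕ) : (qgen * pgen) ^ k = R (-(k : ℤ)) := by
  have h : qgen * pgen = R (-1) := by
    rw [qgen_eq, pgen_eq, S_mul_S]; norm_num
  rw [h, R_pow, mul_neg_one]

lemma tword_ff (k : ℕ) : tword false k false = R (-(k : ℤ)) := by
  show 1 * (qgen * pgen) ^ k * 1 = _
  rw [one_mul, mul_one, qp_eq]

lemma tword_tf (k : ℕ) : tword true k false = S (-(k : ℤ)) := by
  show pgen * (qgen * pgen) ^ k * 1 = _
  rw [mul_one, qp_eq, pgen_mul_R]

lemma tword_ft (k : ℕ) : tword false k true = S (1 + (k : ℤ)) := by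
  show 1 * (qgen * pgen) ^ k * qgen = _
  rw [one_mul, qp_eq, qgen_eq, R_mul_S]
  congr 1
  ring

lemma tword_tt (k : ℕ) : tword true k true = R (1 + (k : ℤ)) := by
  show pgen * (qgen * pgen) ^ k * qgen = _
  rw [qp_eq, pgen_mul_R, qgen_eq, S_mul_S]
  congr 1
  ring

lemma B_cast_sub (N c k : ℕ) (hc : c ≤ N) : B N ((c : ℤ) - (k : ℤ)) = N.choose (N - c + k) := by
  by_cases hk : k ≤ c
  · have h0 : ((c : ℤ) - k) = ((c - k : ℕ) : ℤ) := by omega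
    rw [h0, B_natCast]
    have h1 : N - c + k ≤ N := by omega
    rw [← Nat.choose_symm h1]
    congr 1
    omega
  · rw [B_neg _ (by omega)]
    exact (Nat.choose_eq_zero_of_lt (by omega)).symm

lemma theta_card (n : ℕ) (u v : Bool) (k : ℕ) :
    (Theta n u (k : ℤ) v).card = Cnt n (tword u k v) := by
  unfold Theta Cnt
  rw [if_neg (by omega : ¬(k : ℤ) < 0), Int.toNat_natCast]

lemma part1 (m : ℕ) (hm : 1 ≤ m) (u v : Bool) (k : ℕ) :
    Cnt (2*m) (tword u k v) = Nat.choose (2*m-1) (m+k) := by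
  have hn : 2*m - 1 + 1 = 2*m := by omega
  cases u <;> cases v
  · rw [tword_ff]
    have h := (cnt_formula (2*m-1) (-(k : ℤ))).1
    rw [hn] at h
    rw [h, B_congr _ (show (((2*m)/2 : ℕ) : ℤ) - -(k : ℤ) = ((m+k : ℕ) : ℤ) by omega),
      B_natCast]
  · rw [tword_ft]
    have h := (cnt_formula (2*m-1) (1 + (k : ℤ))).2
    rw [hn] at h
    rw [show 2*m-1+2 = 2*m+1 by omega] at h
    rw [h, B_congr _ (show (((2*m+1)/2 : ℕ) : ℤ) - (1 + (k:ℤ)) = ((m-1 : ℕ) : ℤ) - (k : ℤ) by omega),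
      B_cast_sub (2*m-1) (m-1) k (by omega)]
    congr 1
    omega
  · rw [tword_tf]
    have h := (cnt_formula (2*m-1) (-(k : ℤ))).2
    rw [hn] at h
    rw [show 2*m-1+2 = 2*m+1 by omega] at h
    rw [h, B_congr _ (show (((2*m+1)/2 : ℕ) : ℤ) - -(k : ℤ) = ((m+k : ℕ) : ℤ) by omega),
      B_natCast]
  · rw [tword_tt]
    have h := (cnt_formula (2*m-1) (1 + (k : ℤ))).1
    rw [hn] at h
    rw [h, B_congr _ (show (((2*m)/2 : ℕ) : ℤ) - (1 + (k:ℤ)) = ((m-1 : ℕ) : ℤ) - (k : ℤ) by omega),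
      B_cast_sub (2*m-1) (m-1) k (by omega)]
    congr 1
    omega

lemma part2 (m : ℕ) (hm : 1 ≤ m) (u v : Bool) (k : ℕ) :
    Cnt (2*m+1) (tword u k v) = Nat.choose (2*m) (m + (if u then 1 else 0) + k) := by
  cases u <;> cases v
  · rw [tword_ff, (cnt_formula (2*m) (-(k : ℤ))).1,
      B_congr _ (show (((2*m+1)/2 : ℕ) : ℤ) - -(k : ℤ) = ((m+k : ℕ) : ℤ) by omega), B_natCast]
    norm_num
  · rw [tword_ft, (cnt_formula (2*m) (1 + (k : ℤ))).2,
      B_congr _ (show (((2*m+2)/2 : ℕ) : ℤ) - (1 + (k:ℤ)) = ((m : ℕ) : ℤ) - (k : ℤ) by omega),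
      B_cast_sub (2*m) m k (by omega)]
    congr 1
    all_goals simp
    all_goals omega
  · rw [tword_tf, (cnt_formula (2*m) (-(k : ℤ))).2,
      B_congr _ (show (((2*m+2)/2 : ℕ) : ℤ) - -(k : ℤ) = ((m+1+k : ℕ) : ℤ) by omega), B_natCast]
    norm_num
  · rw [tword_tt, (cnt_formula (2*m) (1 + (k : ℤ))).1,
      B_congr _ (show (((2*m+1)/2 : ℕ) : ℤ) - (1 + (k:ℤ)) = ((m-1 : ℕ) : ℤ) - (k : ℤ) by omega),
      B_cast_sub (2*m) (m-1) k (by omega)]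
    congr 1
    all_goals simp
    all_goals omega


/-- `|Θ^{2m}_{ukv}| = C(2m−1, m+k)` and `|Θ^{2m+1}_{ukv}| = C(2m, m+u+k)`
for all `k ∈ ℕ`; in particular `|Θ^{2m}_{ukv}| = C(2m−1, m−1−k)` for `0 ≤ k ≤ m−1` and
`|Θ^{2m+1}_{ukv}| = C(2m, m−u−k)` for `0 ≤ k ≤ m−u`. -/
theorem statement13 (m : ℕ) (hm : 1 ≤ m) (u v : Bool) :
    (∀ k : ℕ, (Theta (2 * m) u (k : ℤ) v).card = Nat.choose (2 * m - 1) (m + k)) ∧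
    (∀ k : ℕ, (Theta (2 * m + 1) u (k : ℤ) v).card
        = Nat.choose (2 * m) (m + (if u then 1 else 0) + k)) ∧
    (∀ k : ℕ, k ≤ m - 1 →
      (Theta (2 * m) u (k : ℤ) v).card = Nat.choose (2 * m - 1) (m - 1 - k)) ∧
    (∀ k : ℕ, k ≤ m - (if u then 1 else 0) →
      (Theta (2 * m + 1) u (k : ℤ) v).card
        = Nat.choose (2 * m) (m - (if u then 1 else 0) - k)) := by
  refine ⟨?_, ?_, ?_, ?_⟩
  · intro k
    rw [theta_card, part1 m hm u v k]
  · intro k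
    rw [theta_card, part2 m hm u v k]
  · intro k hk
    rw [theta_card, part1 m hm u v k,
      ← Nat.choose_symm (show m + k ≤ 2*m-1 by omega)]
    congr 1
    omega
  · intro k hk
    have hw1 : (if u then 1 else 0) ≤ 1 := by cases u <;> simp
    rw [theta_card, part2 m hm u v k,
      ← Nat.choose_symm (show m + (if u then 1 else 0) + k ≤ 2*m by
        rcases Nat.le_one_iff_eq_zero_or_eq_one.mp hw1 with h | h <;> rw [h] at hk ⊢ <;> omega)]
    congr 1
    rcases Nat.le_one_iff_eq_zero_or_eq_one.mp hw1 with h | h <;> rw [h] at hk ⊢ <;> omega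
end

section
/- Let s ∈ ℝ with |s| < 1, and let x₁, x₂ ∈ ℝ be such that neither x₁ nor x₂ is an integer multiple of π. Then 1 − (cos x₁ cos x₂ − s sin x₁ sin x₂)² > 0 and sin²x₁ sin²x₂ / (1 − (cos x₁ cos x₂ − s sin x₁ sin x₂)²) ≤ 1/(1 − s²), with equality when both x₁ and x₂ are odd integer multiples of π/2. (Together with |cos x₁ cos x₂ − s sin x₁ sin x₂| = 1 ⟺ x₁, x₂ ∈ πℤ, this shows that for the L = 1 ancilla-based scheme the choice (x₁, x₂) = (π/2, π/2) maximizes the variance reduction factor, i.e., the Chebyshev likelihood function is optimal.) -/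
open Real

lemma cos_odd_half_pi {n : ℤ} (hn : Odd n) {x : ℝ} (hx : x = n * (Real.pi / 2)) :
    Real.cos x = 0 := by
  obtain ⟨k, rfl⟩ := hn
  have : x = k * Real.pi + Real.pi / 2 := by
    rw [hx]; push_cast; ring
  rw [this, Real.cos_add, Real.cos_pi_div_two, Real.sin_pi_div_two,
    Real.sin_int_mul_pi]
  ring

/-- for |s| < 1 and x₁, x₂ not integer multiples of π, the denominator
`1 − (cos x₁ cos x₂ − s sin x₁ sin x₂)²` is positive, the quotient
`sin²x₁ sin²x₂ / (1 − (cos x₁ cos x₂ − s sin x₁ sin x₂)²)` is at most `1/(1−s²)`,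
and equality holds when both x₁ and x₂ are odd integer multiples of π/2. -/
theorem statement19 (s x₁ x₂ : ℝ) (hs : |s| < 1)
    (h₁ : ¬ ∃ n : ℤ, x₁ = n * Real.pi) (h₂ : ¬ ∃ n : ℤ, x₂ = n * Real.pi) :
    0 < 1 - (Real.cos x₁ * Real.cos x₂ - s * Real.sin x₁ * Real.sin x₂) ^ 2 ∧
    Real.sin x₁ ^ 2 * Real.sin x₂ ^ 2 /
        (1 - (Real.cos x₁ * Real.cos x₂ - s * Real.sin x₁ * Real.sin x₂) ^ 2)
      ≤ 1 / (1 - s ^ 2) ∧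
    ((∃ n : ℤ, Odd n ∧ x₁ = n * (Real.pi / 2)) →
      (∃ n : ℤ, Odd n ∧ x₂ = n * (Real.pi / 2)) →
      Real.sin x₁ ^ 2 * Real.sin x₂ ^ 2 /
          (1 - (Real.cos x₁ * Real.cos x₂ - s * Real.sin x₁ * Real.sin x₂) ^ 2)
        = 1 / (1 - s ^ 2)) := by
  have hs2 : 0 < 1 - s ^ 2 := by
    have := abs_nonneg s
    nlinarith [sq_abs s]
  have hsin1 : Real.sin x₁ ≠ 0 := by
    intro h; exact h₁ (by rcases Real.sin_eq_zero_iff.mp h with ⟨n, hn⟩; exact ⟨n, hn.symm⟩)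
  have hsin2 : Real.sin x₂ ≠ 0 := by
    intro h; exact h₂ (by rcases Real.sin_eq_zero_iff.mp h with ⟨n, hn⟩; exact ⟨n, hn.symm⟩)
  have hp1 : (0:ℝ) < Real.sin x₁ ^ 2 := by positivity
  have hp2 : (0:ℝ) < Real.sin x₂ ^ 2 := by positivity
  have hc1 := Real.sin_sq_add_cos_sq x₁
  have hc2 := Real.sin_sq_add_cos_sq x₂
  -- key identity
  have key : 1 - (Real.cos x₁ * Real.cos x₂ - s * Real.sin x₁ * Real.sin x₂) ^ 2
      = (1 - s ^ 2) * (Real.sin x₁ ^ 2 * Real.sin x₂ ^ 2)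
        + (Real.sin x₁ * Real.cos x₂ + s * Real.cos x₁ * Real.sin x₂) ^ 2
        + (1 - s ^ 2) * (Real.cos x₁ * Real.sin x₂) ^ 2 := by
    nlinarith [hc1, hc2]
  have hrest : (0:ℝ) ≤ (Real.sin x₁ * Real.cos x₂ + s * Real.cos x₁ * Real.sin x₂) ^ 2
        + (1 - s ^ 2) * (Real.cos x₁ * Real.sin x₂) ^ 2 := by positivity
  have hden : 0 < 1 - (Real.cos x₁ * Real.cos x₂ - s * Real.sin x₁ * Real.sin x₂) ^ 2 := by
    rw [key]; nlinarith [mul_pos hs2 (mul_pos hp1 hp2)]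
  refine ⟨hden, ?_, ?_⟩
  · rw [div_le_div_iff₀ hden hs2]
    nlinarith [key]
  · rintro ⟨n, hn, hx1⟩ ⟨m, hm, hx2⟩
    have hcos1 : Real.cos x₁ = 0 := cos_odd_half_pi hn hx1
    have hcos2 : Real.cos x₂ = 0 := cos_odd_half_pi hm hx2
    have hs1 : Real.sin x₁ ^ 2 = 1 := by nlinarith
    have hs2' : Real.sin x₂ ^ 2 = 1 := by nlinarith
    have hnum : Real.sin x₁ ^ 2 * Real.sin x₂ ^ 2 = 1 := by rw [hs1, hs2']; ring
    have hd : (Real.cos x₁ * Real.cos x₂ - s * Real.sin x₁ * Real.sin x₂) ^ 2 = s ^ 2 := by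
      rw [hcos1]
      have h' : (0 * Real.cos x₂ - s * Real.sin x₁ * Real.sin x₂) ^ 2
          = s ^ 2 * (Real.sin x₁ ^ 2 * Real.sin x₂ ^ 2) := by ring
      rw [h', hnum, mul_one]
    rw [hnum, hd]
end
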